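/- arXiv:1003.1588 — 4 statements merged into one kernel-verified Lean document; each statement's English description precedes it below -/
import Mathlib

section
/- Let I be a witnessed fuzzy interpretation that is a model of the knowledge base K2 under Product semantics. Then for every natural number n ≥ 1 there exist elements b_1, b_2, …, b_n ∈ Δ^I such that 1/2 = A^I(b_1) < A^I(b_2) < … < A^I(b_n) < 1. -/
/-- ALC concepts over a single atomic concept `A` and a single role `R`. -/
inductive ALCConcept : Type where
  | atom : ALCConcept
  | top  : ALCConcept
  | bot  : ALCConcept
  | conj : ALCConcept → ALCConcept → ALCConcept
  | disj : ALCConcept → ALCConcept → ALCConcept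
  | neg  : ALCConcept → ALCConcept
  | all  : ALCConcept → ALCConcept
  | ex   : ALCConcept → ALCConcept

/-- Product t-norm. -/
def prodT (x y : ℝ) : ℝ := x * y
/-- Product t-conorm. -/
def prodS (x y : ℝ) : ℝ := x + y - x * y
/-- Product negation. -/
noncomputable def prodNeg (x : ℝ) : ℝ := if x = 0 then 1 else 0
/-- Product (Goguen) implication. -/
noncomputable def prodImp (x y : ℝ) : ℝ := if x ≤ y then 1 else y / x

/-- Value of a concept at a point under Product semantics. -/
noncomputable def prodVal {Δ : Type} (A : Δ → ℝ) (R : Δ → Δ → ℝ) : ALCConcept → Δ → ℝ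
  | ALCConcept.atom, x => A x
  | ALCConcept.top, _ => 1
  | ALCConcept.bot, _ => 0
  | ALCConcept.conj C D, x => prodT (prodVal A R C x) (prodVal A R D x)
  | ALCConcept.disj C D, x => prodS (prodVal A R C x) (prodVal A R D x)
  | ALCConcept.neg C, x => prodNeg (prodVal A R C x)
  | ALCConcept.all C, x => ⨅ y, prodImp (R x y) (prodVal A R C y)
  | ALCConcept.ex C, x => ⨆ y, prodT (R x y) (prodVal A R C y)

/-- Degree of subsumption `(C ⊑ D)^I` under Product semantics. -/
noncomputable def prodSub {Δ : Type} (A : Δ → ℝ) (R : Δ → Δ → ℝ) (C D : ALCConcept) : ℝ :=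
  ⨅ x, prodImp (prodVal A R C x) (prodVal A R D x)

/-- A fuzzy interpretation: nonempty domain, values in `[0,1]`. -/
def IsInterp {Δ : Type} (A : Δ → ℝ) (R : Δ → Δ → ℝ) : Prop :=
  Nonempty Δ ∧ (∀ x, A x ∈ Set.Icc (0:ℝ) 1) ∧ (∀ x y, R x y ∈ Set.Icc (0:ℝ) 1)

/-- Witnessed interpretation under Product semantics. -/
def Witnessed {Δ : Type} (A : Δ → ℝ) (R : Δ → Δ → ℝ) : Prop :=
  ∀ (C D : ALCConcept) (x : Δ),
    (∃ y, prodVal A R (ALCConcept.ex C) x = prodT (R x y) (prodVal A R C y)) ∧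
    (∃ y, prodVal A R (ALCConcept.all C) x = prodImp (R x y) (prodVal A R C y)) ∧
    (∃ y, prodSub A R C D = prodImp (prodVal A R C y) (prodVal A R D y))

/-- `I` (with designated element `a`) is a model of the knowledge base `K2`. -/
def ModelK2 {Δ : Type} (A : Δ → ℝ) (R : Δ → Δ → ℝ) (a : Δ) : Prop :=
  A a = 1/2 ∧
  prodSub A R ALCConcept.top (ALCConcept.ex ALCConcept.top) = 1 ∧
  (prodSub A R (ALCConcept.all ALCConcept.atom) (ALCConcept.ex ALCConcept.atom) = 1 ∧
   prodSub A R (ALCConcept.ex ALCConcept.atom) (ALCConcept.all ALCConcept.atom) = 1) ∧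
  (prodSub A R ALCConcept.atom (ALCConcept.conj (ALCConcept.all ALCConcept.atom) (ALCConcept.all ALCConcept.atom)) = 1 ∧
   prodSub A R (ALCConcept.conj (ALCConcept.all ALCConcept.atom) (ALCConcept.all ALCConcept.atom)) ALCConcept.atom = 1)

/- Auxiliary lemmas -/

lemma prodImp_nonneg' {x y : ℝ} (hy : 0 ≤ y) : 0 ≤ prodImp x y := by
  unfold prodImp; split
  · norm_num
  · rename_i h; push_neg at h
    exact div_nonneg hy (le_of_lt (lt_of_le_of_lt hy h))

lemma le_of_one_le_prodImp {x y : ℝ} (hy : 0 ≤ y) (h : 1 ≤ prodImp x y) : x ≤ y := by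
  unfold prodImp at h; split at h
  · assumption
  · rename_i hxy; push_neg at hxy
    have hx : 0 < x := lt_of_le_of_lt hy hxy
    have := (div_lt_one hx).mpr hxy
    linarith

lemma prodImp_one_left {y : ℝ} (hy : y < 1) : prodImp 1 y = y := by
  unfold prodImp
  rw [if_neg (by linarith)]
  simp

lemma sub_one_pointwise {Δ : Type} (A : Δ → ℝ) (R : Δ → Δ → ℝ) (C D : ALCConcept)
    (hD : ∀ x, 0 ≤ prodVal A R D x) (h : prodSub A R C D = 1) :
    ∀ x, prodVal A R C x ≤ prodVal A R C x → prodVal A R C x ≤ prodVal A R D x := by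
  intro x _
  have hbdd : BddBelow (Set.range fun z => prodImp (prodVal A R C z) (prodVal A R D z)) := by
    refine ⟨0, ?_⟩
    rintro v ⟨z, rfl⟩
    exact prodImp_nonneg' (hD z)
  have h1 : (1:ℝ) ≤ prodImp (prodVal A R C x) (prodVal A R D x) := by
    rw [← h]; exact ciInf_le hbdd x
  exact le_of_one_le_prodImp (hD x) h1

lemma key_step {Δ : Type} (A : Δ → ℝ) (R : Δ → Δ → ℝ) (a : Δ)
    (hI : IsInterp A R) (hw : Witnessed A R) (hm : ModelK2 A R a) :
    ∀ x : Δ, A x < 1 → ∃ z : Δ, A z = Real.sqrt (A x) := by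
  obtain ⟨hne, hA, hR⟩ := hI
  haveI : Nonempty Δ := hne
  obtain ⟨ha, h2, ⟨h3a, h3b⟩, h4a, h4b⟩ := hm
  -- basic rewritings
  have hAllVal : ∀ x : Δ, prodVal A R (ALCConcept.all ALCConcept.atom) x
      = ⨅ y, prodImp (R x y) (A y) := fun _ => rfl
  have hExVal : ∀ x : Δ, prodVal A R (ALCConcept.ex ALCConcept.atom) x
      = ⨆ y, prodT (R x y) (A y) := fun _ => rfl
  have hExTopVal : ∀ x : Δ, prodVal A R (ALCConcept.ex ALCConcept.top) x
      = ⨆ y, prodT (R x y) 1 := fun _ => rfl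
  -- boundedness facts
  have bddAll : ∀ x : Δ, BddBelow (Set.range fun y => prodImp (R x y) (A y)) := by
    intro x; refine ⟨0, ?_⟩; rintro v ⟨y, rfl⟩; exact prodImp_nonneg' (hA y).1
  have bddEx : ∀ x : Δ, BddAbove (Set.range fun y => prodT (R x y) (A y)) := by
    intro x; refine ⟨1, ?_⟩; rintro v ⟨y, rfl⟩
    exact mul_le_one₀ (hR x y).2 (hA y).1 (hA y).2
  have bddExTop : ∀ x : Δ, BddAbove (Set.range fun y => prodT (R x y) (1:ℝ)) := by
    intro x; refine ⟨1, ?_⟩; rintro v ⟨y, rfl⟩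
    simpa [prodT] using (hR x y).2
  -- nonnegativity of the relevant concept values
  have hAllNonneg : ∀ x : Δ, 0 ≤ prodVal A R (ALCConcept.all ALCConcept.atom) x := by
    intro x; rw [hAllVal]
    exact le_ciInf fun y => prodImp_nonneg' (hA y).1
  have hExNonneg : ∀ x : Δ, 0 ≤ prodVal A R (ALCConcept.ex ALCConcept.atom) x := by
    intro x; rw [hExVal]
    calc (0:ℝ) ≤ prodT (R x x) (A x) := mul_nonneg (hR x x).1 (hA x).1
    _ ≤ _ := le_ciSup (bddEx x) x
  have hExTopNonneg : ∀ x : Δ, 0 ≤ prodVal A R (ALCConcept.ex ALCConcept.top) x := by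
    intro x; rw [hExTopVal]
    calc (0:ℝ) ≤ prodT (R x x) 1 := by simpa [prodT] using (hR x x).1
    _ ≤ _ := le_ciSup (bddExTop x) x
  -- from axiom 2: every point has an R-successor with degree 1
  have hRfull : ∀ x : Δ, ∃ z : Δ, R x z = 1 := by
    intro x
    have h1le : (1:ℝ) ≤ prodVal A R (ALCConcept.ex ALCConcept.top) x := by
      have := sub_one_pointwise A R ALCConcept.top (ALCConcept.ex ALCConcept.top)
        hExTopNonneg h2 x le_rfl
      simpa [prodVal] using this
    have hle1 : prodVal A R (ALCConcept.ex ALCConcept.top) x ≤ 1 := by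
      rw [hExTopVal]
      exact ciSup_le fun y => by simpa [prodT] using (hR x y).2
    obtain ⟨z, hz⟩ := (hw ALCConcept.top ALCConcept.top x).1
    refine ⟨z, ?_⟩
    have : prodT (R x z) (prodVal A R ALCConcept.top z) = 1 := by
      rw [← hz]; linarith
    simpa [prodT, prodVal] using this
  -- ∀R.A = ∃R.A at every point
  have hEq34 : ∀ x : Δ, prodVal A R (ALCConcept.all ALCConcept.atom) x
      = prodVal A R (ALCConcept.ex ALCConcept.atom) x := by
    intro x
    exact le_antisymm
      (sub_one_pointwise A R _ _ hExNonneg h3a x le_rfl)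
      (sub_one_pointwise A R _ _ hAllNonneg h3b x le_rfl)
  -- A x = (∀R.A)(x)²
  have hSq : ∀ x : Δ, A x = prodVal A R (ALCConcept.all ALCConcept.atom) x
      * prodVal A R (ALCConcept.all ALCConcept.atom) x := by
    intro x
    have hconj : ∀ y : Δ, prodVal A R (ALCConcept.conj (ALCConcept.all ALCConcept.atom)
        (ALCConcept.all ALCConcept.atom)) y
        = prodVal A R (ALCConcept.all ALCConcept.atom) y
          * prodVal A R (ALCConcept.all ALCConcept.atom) y := fun _ => rfl
    have hconjNonneg : ∀ y : Δ, 0 ≤ prodVal A R (ALCConcept.conj (ALCConcept.all ALCConcept.atom)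
        (ALCConcept.all ALCConcept.atom)) y := by
      intro y; rw [hconj]; exact mul_nonneg (hAllNonneg y) (hAllNonneg y)
    have hAtomNonneg : ∀ y : Δ, 0 ≤ prodVal A R ALCConcept.atom y := fun y => (hA y).1
    have h1 := sub_one_pointwise A R _ _ hconjNonneg h4a x le_rfl
    have h2' := sub_one_pointwise A R _ _ hAtomNonneg h4b x le_rfl
    rw [hconj] at h1 h2'
    have : prodVal A R ALCConcept.atom x = A x := rfl
    rw [this] at h1 h2'
    linarith
  -- the main step
  intro x hx
  set v := prodVal A R (ALCConcept.all ALCConcept.atom) x with hv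
  have hv0 : 0 ≤ v := hAllNonneg x
  have hvsqrt : v = Real.sqrt (A x) := by
    rw [hSq x, ← hv, Real.sqrt_mul_self hv0]
  obtain ⟨z, hz⟩ := hRfull x
  have hvlt1 : v < 1 := by
    rw [hvsqrt]
    exact (Real.sqrt_lt' one_pos).mpr (by nlinarith)
  have hup : A z ≤ v := by
    have h1 : prodT (R x z) (A z) ≤ prodVal A R (ALCConcept.ex ALCConcept.atom) x := by
      rw [hExVal]; exact le_ciSup (bddEx x) z
    have : A z ≤ prodVal A R (ALCConcept.ex ALCConcept.atom) x := by
      simpa [prodT, hz] using h1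
    rw [hv, hEq34 x]; exact this
  have hAzlt1 : A z < 1 := lt_of_le_of_lt hup hvlt1
  have hdown : v ≤ A z := by
    have h1 : v ≤ prodImp (R x z) (A z) := by
      rw [hv, hAllVal]; exact ciInf_le (bddAll x) z
    rwa [hz, prodImp_one_left hAzlt1] at h1
  refine ⟨z, ?_⟩
  rw [le_antisymm hup hdown, hvsqrt]

theorem stmt6 {Δ : Type} (A : Δ → ℝ) (R : Δ → Δ → ℝ) (a : Δ)
    (hI : IsInterp A R) (hw : Witnessed A R) (hm : ModelK2 A R a)
    (n : ℕ) (hn : 1 ≤ n) :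
    ∃ b : Fin n → Δ,
      A (b ⟨0, hn⟩) = 1/2 ∧
      StrictMono (fun i : Fin n => A (b i)) ∧
      A (b ⟨n - 1, by omega⟩) < 1 := by
  classical
  have key := key_step A R a hI hw hm
  let f : Δ → Δ := fun x => if h : A x < 1 then (key x h).choose else x
  have hf : ∀ x, A x < 1 → A (f x) = Real.sqrt (A x) := by
    intro x h
    simp only [f, dif_pos h]
    exact (key x h).choose_spec
  let s : ℕ → Δ := fun k => f^[k] a
  have hs0 : A (s 0) = 1/2 := hm.1
  have inv : ∀ k, 1/2 ≤ A (s k) ∧ A (s k) < 1 := by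
    intro k; induction k with
    | zero => rw [hs0]; norm_num
    | succ k ih =>
      have hstep : A (s (k+1)) = Real.sqrt (A (s k)) := by
        have h1 : s (k+1) = f (s k) := Function.iterate_succ_apply' f k a
        rw [h1, hf _ ih.2]
      constructor
      · rw [hstep]
        have : (1/2 : ℝ) ^ 2 ≤ A (s k) := by nlinarith [ih.1]
        exact (Real.le_sqrt' (by norm_num)).mpr this
      · rw [hstep]
        exact (Real.sqrt_lt' one_pos).mpr (by nlinarith [ih.2, ih.1])
  have hmono : ∀ k, A (s k) < A (s (k+1)) := by
    intro k
    have hstep : A (s (k+1)) = Real.sqrt (A (s k)) := by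
      have h1 : s (k+1) = f (s k) := Function.iterate_succ_apply' f k a
      rw [h1, hf _ (inv k).2]
    rw [hstep]
    have h0 : 0 ≤ A (s k) := le_trans (by norm_num) (inv k).1
    exact (Real.lt_sqrt h0).mpr (by nlinarith [(inv k).1, (inv k).2])
  have hSM : StrictMono (fun k => A (s k)) := strictMono_nat_of_lt_succ hmono
  refine ⟨fun i => s i.val, hs0, ?_, (inv (n-1)).2⟩
  intro i j hij
  exact hSM hij
end

section
/- There is no fuzzy interpretation with finite domain Δ^I that is a model of the knowledge base K2 under Product semantics. -/
section Aux
variable {Δ : Type} [Finite Δ] [Nonempty Δ]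

omit [Nonempty Δ] in
lemma finInf_le' (f : Δ → ℝ) (y : Δ) : (⨅ x, f x) ≤ f y :=
  ciInf_le (Set.finite_range f).bddBelow y

omit [Nonempty Δ] in
lemma le_finSup' (f : Δ → ℝ) (y : Δ) : f y ≤ ⨆ x, f x :=
  le_ciSup (Set.finite_range f).bddAbove y

lemma finSup_exists' (f : Δ → ℝ) : ∃ y, (⨆ x, f x) = f y := by
  obtain ⟨y, hy⟩ := Finite.exists_max f
  exact ⟨y, le_antisymm (ciSup_le hy) (le_finSup' f y)⟩

lemma prodImp_nonneg'_s7 {u v : ℝ} (hv : 0 ≤ v) : 0 ≤ prodImp u v := by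
  unfold prodImp
  split
  · norm_num
  · rename_i hc
    push_neg at hc
    exact div_nonneg hv (le_of_lt (lt_of_le_of_lt hv hc))

lemma prodImp_one_imp' {u v : ℝ} (hv : 0 ≤ v) (h : 1 ≤ prodImp u v) : u ≤ v := by
  unfold prodImp at h
  split at h
  · assumption
  · rename_i hc
    push_neg at hc
    have hu : 0 < u := lt_of_le_of_lt hv hc
    have : v / u < 1 := (div_lt_one hu).2 hc
    linarith

end Aux

theorem stmt7 {Δ : Type} [Finite Δ] (A : Δ → ℝ) (R : Δ → Δ → ℝ) (a : Δ)
    (hI : IsInterp A R) (hm : ModelK2 A R a) : False := by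
  classical
  obtain ⟨hne, hA, hR⟩ := hI
  haveI := hne
  have hA0 : ∀ x, 0 ≤ A x := fun x => (hA x).1
  have hA1 : ∀ x, A x ≤ 1 := fun x => (hA x).2
  have hR0 : ∀ x y, 0 ≤ R x y := fun x y => (hR x y).1
  have hR1 : ∀ x y, R x y ≤ 1 := fun x y => (hR x y).2
  obtain ⟨ha, h2, ⟨h3a, h3b⟩, h4a, h4b⟩ := hm
  -- generic extraction from subsumption degree 1
  have key : ∀ (C D : ALCConcept), prodSub A R C D = 1 →
      (∀ x, 0 ≤ prodVal A R D x) → ∀ x, prodVal A R C x ≤ prodVal A R D x := by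
    intro C D h hv x
    apply prodImp_one_imp' (hv x)
    rw [prodSub] at h
    calc (1:ℝ) = _ := h.symm
      _ ≤ _ := finInf_le' _ x
  have hFdef : ∀ x, prodVal A R (ALCConcept.all ALCConcept.atom) x
      = ⨅ y, prodImp (R x y) (A y) := fun x => by simp [prodVal]
  have hEdef : ∀ x, prodVal A R (ALCConcept.ex ALCConcept.atom) x
      = ⨆ y, R x y * A y := fun x => by simp [prodVal, prodT]
  have hCdef : ∀ x, prodVal A R (ALCConcept.conj (ALCConcept.all ALCConcept.atom)
      (ALCConcept.all ALCConcept.atom)) x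
      = (⨅ y, prodImp (R x y) (A y)) * (⨅ y, prodImp (R x y) (A y)) := fun x => by
    simp [prodVal, prodT]
  have hF0 : ∀ x, 0 ≤ ⨅ y, prodImp (R x y) (A y) := fun x =>
    le_ciInf fun y => prodImp_nonneg'_s7 (hA0 y)
  have hE0 : ∀ x, 0 ≤ ⨆ y, R x y * A y := fun x => by
    have y := Classical.arbitrary Δ
    exact le_trans (mul_nonneg (hR0 x y) (hA0 y)) (le_finSup' (fun y => R x y * A y) y)
  have hE1 : ∀ x, (⨆ y, R x y * A y) ≤ 1 := fun x =>
    ciSup_le fun y => mul_le_one₀ (hR1 x y) (hA0 y) (hA1 y)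
  -- F = E
  have hFE : ∀ x, (⨅ y, prodImp (R x y) (A y)) = ⨆ y, R x y * A y := by
    intro x
    have h1 := key _ _ h3a (fun z => by rw [hEdef]; exact hE0 z) x
    have h2 := key _ _ h3b (fun z => by rw [hFdef]; exact hF0 z) x
    rw [hFdef, hEdef] at h1 h2
    exact le_antisymm h1 h2
  -- A = F * F
  have hAF : ∀ x, A x = (⨅ y, prodImp (R x y) (A y)) * (⨅ y, prodImp (R x y) (A y)) := by
    intro x
    have h1 := key _ _ h4a (fun z => by rw [hCdef]; exact mul_nonneg (hF0 z) (hF0 z)) x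
    have h2 := key _ _ h4b (fun z => hA0 z) x
    rw [hCdef] at h1 h2
    simp only [prodVal] at h1 h2
    exact le_antisymm h1 h2
  -- every x has a successor with role degree 1
  have hsupR : ∀ x, ∃ y, R x y = 1 := by
    intro x
    have hv : ∀ z, 0 ≤ prodVal A R (ALCConcept.ex ALCConcept.top) z := by
      intro z
      have : prodVal A R (ALCConcept.ex ALCConcept.top) z = ⨆ y, R z y := by
        simp [prodVal, prodT]
      rw [this]
      have y := Classical.arbitrary Δ
      exact le_trans (hR0 z y) (le_finSup' _ y)
    have h1 := key _ _ h2 hv x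
    have hx : prodVal A R (ALCConcept.ex ALCConcept.top) x = ⨆ y, R x y := by
      simp [prodVal, prodT]
    rw [hx] at h1
    simp only [prodVal] at h1
    obtain ⟨y, hy⟩ := finSup_exists' (fun y => R x y)
    rw [hy] at h1
    exact ⟨y, le_antisymm (hR1 x y) h1⟩
  -- the key step
  have step : ∀ x, A x < 1 → ∃ y, A y * A y = A x ∧ A y < 1 := by
    intro x hx
    obtain ⟨y₀, hy₀⟩ := hsupR x
    have hFle : (⨅ y, prodImp (R x y) (A y)) ≤ prodImp (R x y₀) (A y₀) :=
      finInf_le' _ y₀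
    have hEge : R x y₀ * A y₀ ≤ ⨆ y, R x y * A y := le_finSup' (fun y => R x y * A y) y₀
    rw [hy₀, one_mul] at hEge
    rcases lt_or_ge (A y₀) 1 with h1 | h1
    · have himp : prodImp (R x y₀) (A y₀) = A y₀ := by
        rw [hy₀]
        unfold prodImp
        rw [if_neg (by linarith), div_one]
      rw [himp] at hFle
      have heq : A y₀ = ⨅ y, prodImp (R x y) (A y) := by
        rw [hFE x]
        exact le_antisymm hEge (by rw [← hFE x]; exact hFle)
      exact ⟨y₀, by rw [heq, ← hAF x], h1⟩
    · exfalso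
      have hy1 : A y₀ = 1 := le_antisymm (hA1 y₀) h1
      rw [hy1] at hEge
      have hE : (⨆ y, R x y * A y) = 1 := le_antisymm (hE1 x) hEge
      have : A x = 1 := by rw [hAF x, hFE x, hE, one_mul]
      linarith
  -- build an infinite strictly increasing chain
  have step2 : ∀ x : Δ, ∃ y : Δ, (0 < A x ∧ A x < 1) →
      (0 < A y ∧ A y < 1) ∧ A x < A y := by
    intro x
    by_cases hx : 0 < A x ∧ A x < 1
    · obtain ⟨y, hy1, hy2⟩ := step x hx.2
      refine ⟨y, fun _ => ⟨⟨?_, hy2⟩, ?_⟩⟩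
      · nlinarith [hA0 y, hx.1]
      · nlinarith [hA0 y, hx.1]
    · exact ⟨x, fun h => absurd h hx⟩
  choose nxt hnxt using step2
  set g : ℕ → Δ := fun n => nxt^[n] a with hg
  have hg0 : g 0 = a := rfl
  have hgs : ∀ n, g (n + 1) = nxt (g n) := fun n => Function.iterate_succ_apply' nxt n a
  have hinv : ∀ n, 0 < A (g n) ∧ A (g n) < 1 := by
    intro n
    induction n with
    | zero => rw [hg0, ha]; norm_num
    | succ n ih => rw [hgs n]; exact (hnxt (g n) ih).1
  have hlt : ∀ n, A (g n) < A (g (n + 1)) := by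
    intro n
    rw [hgs n]
    exact (hnxt (g n) (hinv n)).2
  have hsm : StrictMono (fun n => A (g n)) := strictMono_nat_of_lt_succ hlt
  have hginj : Function.Injective g := by
    intro m n h
    exact hsm.injective (show A (g m) = A (g n) by rw [h])
  haveI : Finite ℕ := Finite.of_injective g hginj
  exact not_finite ℕ
end

section
/- The interpretation I defined by: Δ^I = {1, 2, 3, …}; R^I(i, i+1) = 1 for every i and R^I(u, v) = 0 for all other pairs; A^I(i) = (1/2)^(1/2^(i−1)) (the 2^(i−1)-th root of 1/2) for every i; and a^I = 1, is a witnessed interpretation under Product semantics and is a model of the knowledge base K2. -/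
/-- The atomic-concept membership function of the model:
`A^I(i) = (1/2)^(1/2^i)` (indices shifted: index `i : ℕ` is the element `i+1` of the paper). -/
noncomputable def A9 : ℕ → ℝ := fun i => ((1:ℝ)/2) ^ (((1:ℝ)/2) ^ i)

/-- The role membership function of the model: `R^I(i, i+1) = 1`, else `0`. -/
noncomputable def R9 : ℕ → ℕ → ℝ := fun i j => if j = i + 1 then 1 else 0

open Filter Topology

lemma A9_pos (i : ℕ) : 0 < A9 i := Real.rpow_pos_of_pos (by norm_num) _

lemma A9_le_one (i : ℕ) : A9 i ≤ 1 :=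
  Real.rpow_le_one (by norm_num) (by norm_num) (by positivity)

lemma A9_sq (i : ℕ) : A9 (i + 1) * A9 (i + 1) = A9 i := by
  unfold A9
  rw [← Real.rpow_add (by norm_num : (0:ℝ) < 1/2)]
  congr 1
  rw [pow_succ]
  ring

lemma A9_tendsto : Tendsto A9 atTop (𝓝 1) := by
  have h1 : Tendsto (fun i : ℕ => ((1:ℝ)/2) ^ i) atTop (𝓝 0) :=
    tendsto_pow_atTop_nhds_zero_of_lt_one (by norm_num) (by norm_num)
  have h2 : ContinuousAt (fun t : ℝ => ((1:ℝ)/2) ^ t) 0 :=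
    Real.continuousAt_const_rpow (by norm_num)
  have h3 := h2.tendsto.comp h1
  rw [Real.rpow_zero] at h3
  exact h3

lemma prodImp_self (a : ℝ) : prodImp a a = 1 := if_pos le_rfl

lemma prodImp_zero_left {b : ℝ} (hb : 0 ≤ b) : prodImp 0 b = 1 := if_pos hb

lemma prodImp_pos_zero {a : ℝ} (ha : 0 < a) : prodImp a 0 = 0 := by
  unfold prodImp; rw [if_neg (by linarith), zero_div]

lemma prodImp_one_left_s9 {b : ℝ} (hb : b ≤ 1) : prodImp 1 b = b := by
  unfold prodImp
  split
  · linarith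
  · rw [div_one]

lemma prodImp_nonneg {a b : ℝ} (ha : 0 ≤ a) (hb : 0 ≤ b) : 0 ≤ prodImp a b := by
  unfold prodImp; split
  · norm_num
  · positivity

lemma prodImp_le_one {a b : ℝ} (hb : 0 ≤ b) : prodImp a b ≤ 1 := by
  unfold prodImp; split
  · exact le_rfl
  · rename_i h
    push_neg at h
    exact le_of_lt ((div_lt_one (lt_of_le_of_lt hb h)).mpr h)

lemma prodImp_eq_min {a b : ℝ} (ha : 0 < a) : prodImp a b = min 1 (b / a) := by
  unfold prodImp; split
  · exact (min_eq_left ((one_le_div ha).mpr ‹a ≤ b›)).symm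
  · rename_i h
    push_neg at h
    exact (min_eq_right (le_of_lt ((div_lt_one ha).mpr h))).symm

lemma exEq (v : ℕ → ℝ) (hv : ∀ y, v y ∈ Set.Icc (0:ℝ) 1) (x : ℕ) :
    (⨆ y, prodT (R9 x y) (v y)) = v (x + 1) := by
  have hterm : ∀ y, prodT (R9 x y) (v y) = if y = x + 1 then v (x + 1) else 0 := by
    intro y
    by_cases h : y = x + 1
    · subst h; simp [prodT, R9]
    · simp [prodT, R9, h]
  have hbdd : BddAbove (Set.range fun y => prodT (R9 x y) (v y)) := by
    refine ⟨1, ?_⟩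
    rintro _ ⟨y, rfl⟩
    dsimp only
    rw [hterm]
    split
    · exact (hv _).2
    · norm_num
  apply le_antisymm
  · apply ciSup_le
    intro y
    rw [hterm]
    split
    · exact le_rfl
    · exact (hv _).1
  · have := le_ciSup hbdd (x + 1)
    rwa [show prodT (R9 x (x+1)) (v (x+1)) = v (x+1) by simp [prodT, R9]] at this

lemma allEq (v : ℕ → ℝ) (hv : ∀ y, v y ∈ Set.Icc (0:ℝ) 1) (x : ℕ) :
    (⨅ y, prodImp (R9 x y) (v y)) = v (x + 1) := by
  have hterm : ∀ y, prodImp (R9 x y) (v y) = if y = x + 1 then v (x + 1) else 1 := by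
    intro y
    by_cases h : y = x + 1
    · subst h
      simp only [R9, if_pos rfl, if_pos]
      exact prodImp_one_left_s9 (hv _).2
    · simp only [R9, if_neg h]
      exact prodImp_zero_left (hv _).1
  have hbdd : BddBelow (Set.range fun y => prodImp (R9 x y) (v y)) := by
    refine ⟨0, ?_⟩
    rintro _ ⟨y, rfl⟩
    dsimp only
    rw [hterm]
    split
    · exact (hv _).1
    · norm_num
  apply le_antisymm
  · have := ciInf_le hbdd (x + 1)
    rwa [hterm, if_pos rfl] at this
  · apply le_ciInf
    intro y
    rw [hterm]
    split
    · exact le_rfl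
    · exact (hv _).2

/-- Key structural property of concept values in this model. -/
def Nice (v : ℕ → ℝ) : Prop :=
  (∀ x, v x ∈ Set.Icc (0:ℝ) 1) ∧
  ((∀ x, v x = 0) ∨ ((∀ x, 0 < v x) ∧ Tendsto v atTop (𝓝 1)))

lemma nice_shift {v : ℕ → ℝ} (h : Nice v) : Nice (fun x => v (x + 1)) := by
  obtain ⟨hb, hd⟩ := h
  refine ⟨fun x => hb (x + 1), ?_⟩
  rcases hd with h0 | ⟨hp, ht⟩
  · exact Or.inl fun x => h0 (x + 1)
  · exact Or.inr ⟨fun x => hp (x + 1), ht.comp (tendsto_add_atTop_nat 1)⟩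

lemma nice_prodVal (C : ALCConcept) : Nice (prodVal A9 R9 C) := by
  induction C with
  | atom =>
    exact ⟨fun x => ⟨(A9_pos x).le, A9_le_one x⟩, Or.inr ⟨A9_pos, A9_tendsto⟩⟩
  | top =>
    exact ⟨fun _ => by norm_num [prodVal], Or.inr ⟨fun _ => by norm_num [prodVal],
      by simp only [prodVal]; exact tendsto_const_nhds⟩⟩
  | bot =>
    exact ⟨fun _ => by norm_num [prodVal], Or.inl fun _ => rfl⟩
  | conj C D ihC ihD =>
    obtain ⟨hCb, hCd⟩ := ihC
    obtain ⟨hDb, hDd⟩ := ihD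
    constructor
    · intro x
      simp only [prodVal, prodT]
      exact ⟨mul_nonneg (hCb x).1 (hDb x).1,
        mul_le_one₀ (hCb x).2 (hDb x).1 (hDb x).2⟩
    · rcases hCd with h0 | ⟨hCp, hCt⟩
      · exact Or.inl fun x => by simp [prodVal, prodT, h0 x]
      rcases hDd with h0 | ⟨hDp, hDt⟩
      · exact Or.inl fun x => by simp [prodVal, prodT, h0 x]
      refine Or.inr ⟨fun x => mul_pos (hCp x) (hDp x), ?_⟩
      have := hCt.mul hDt
      rw [mul_one] at this
      exact this
  | disj C D ihC ihD =>
    obtain ⟨hCb, hCd⟩ := ihC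
    obtain ⟨hDb, hDd⟩ := ihD
    constructor
    · intro x
      simp only [prodVal, prodS]
      obtain ⟨h1, h2⟩ := hCb x
      obtain ⟨h3, h4⟩ := hDb x
      constructor <;> nlinarith
    · rcases hCd with h0 | ⟨hCp, hCt⟩
      · rcases hDd with g0 | ⟨hDp, hDt⟩
        · exact Or.inl fun x => by simp [prodVal, prodS, h0 x, g0 x]
        · refine Or.inr ⟨fun x => ?_, ?_⟩
          · simp only [prodVal, prodS, h0 x]
            simpa using hDp x
          · have heq : ∀ x, prodVal A9 R9 (ALCConcept.disj C D) x = prodVal A9 R9 D x := by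
              intro x; simp [prodVal, prodS, h0 x]
            exact hDt.congr fun x => (heq x).symm
      · rcases hDd with g0 | ⟨hDp, hDt⟩
        · refine Or.inr ⟨fun x => ?_, ?_⟩
          · simp only [prodVal, prodS, g0 x]
            simpa using hCp x
          · have heq : ∀ x, prodVal A9 R9 (ALCConcept.disj C D) x = prodVal A9 R9 C x := by
              intro x; simp [prodVal, prodS, g0 x]
            exact hCt.congr fun x => (heq x).symm
        · refine Or.inr ⟨fun x => ?_, ?_⟩
          · simp only [prodVal, prodS]
            nlinarith [hCp x, hDp x, (hDb x).1, (hCb x).2]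
          · have := (hCt.add hDt).sub (hCt.mul hDt)
            norm_num at this
            exact this.congr fun x => by simp [prodVal, prodS]
  | neg C ihC =>
    obtain ⟨hCb, hCd⟩ := ihC
    rcases hCd with h0 | ⟨hCp, _⟩
    · refine ⟨fun x => by simp [prodVal, prodNeg, h0 x], Or.inr ⟨fun x => by simp [prodVal, prodNeg, h0 x], ?_⟩⟩
      have heq : ∀ x, prodVal A9 R9 (ALCConcept.neg C) x = 1 := fun x => by
        simp [prodVal, prodNeg, h0 x]
      exact tendsto_const_nhds.congr fun x => (heq x).symm
    · refine ⟨fun x => ?_, Or.inl fun x => ?_⟩ <;>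
        simp [prodVal, prodNeg, (hCp x).ne']
  | all C ihC =>
    have key : ∀ x, prodVal A9 R9 (ALCConcept.all C) x = prodVal A9 R9 C (x + 1) := fun x => by
      simp only [prodVal]; exact allEq _ ihC.1 x
    have h := nice_shift ihC
    refine ⟨fun x => key x ▸ h.1 x, ?_⟩
    rcases h.2 with h0 | ⟨hp, ht⟩
    · exact Or.inl fun x => (key x).trans (h0 x)
    · exact Or.inr ⟨fun x => (key x) ▸ hp x, ht.congr fun x => (key x).symm⟩
  | ex C ihC =>
    have key : ∀ x, prodVal A9 R9 (ALCConcept.ex C) x = prodVal A9 R9 C (x + 1) := fun x => by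
      simp only [prodVal]; exact exEq _ ihC.1 x
    have h := nice_shift ihC
    refine ⟨fun x => key x ▸ h.1 x, ?_⟩
    rcases h.2 with h0 | ⟨hp, ht⟩
    · exact Or.inl fun x => (key x).trans (h0 x)
    · exact Or.inr ⟨fun x => (key x) ▸ hp x, ht.congr fun x => (key x).symm⟩

lemma ciInf_attained (h : ℕ → ℝ) (h0 : ∀ x, 0 ≤ h x) (h1 : ∀ x, h x ≤ 1)
    (ht : Tendsto h atTop (𝓝 1)) : ∃ y, (⨅ x, h x) = h y := by
  have hbdd : BddBelow (Set.range h) := ⟨0, by rintro _ ⟨x, rfl⟩; exact h0 x⟩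
  by_cases hcase : (⨅ x, h x) < 1
  · set m := ⨅ x, h x with hm
    have hev : ∀ᶠ x in atTop, (m + 1) / 2 < h x :=
      ht.eventually (eventually_gt_nhds (by linarith))
    obtain ⟨N, hN⟩ := eventually_atTop.mp hev
    obtain ⟨x₁, hx₁⟩ := exists_lt_of_ciInf_lt (show m < (m + 1) / 2 by linarith)
    have hx₁N : x₁ < N := by
      by_contra hc
      push_neg at hc
      linarith [hN x₁ hc]
    obtain ⟨x₀, _, hx₀min⟩ := Finset.exists_min_image (Finset.range N) h
      ⟨x₁, Finset.mem_range.mpr hx₁N⟩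
    refine ⟨x₀, le_antisymm (ciInf_le hbdd x₀) (le_ciInf fun x => ?_)⟩
    by_cases hxN : x < N
    · exact hx₀min x (Finset.mem_range.mpr hxN)
    · push_neg at hxN
      have g1 := hN x hxN
      have g2 := hx₀min x₁ (Finset.mem_range.mpr hx₁N)
      linarith
  · push_neg at hcase
    exact ⟨0, le_antisymm (ciInf_le hbdd 0) ((h1 0).trans hcase)⟩

lemma sub_witness (C D : ALCConcept) :
    ∃ y, prodSub A9 R9 C D = prodImp (prodVal A9 R9 C y) (prodVal A9 R9 D y) := by
  obtain ⟨hCb, hCd⟩ := nice_prodVal C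
  obtain ⟨hDb, hDd⟩ := nice_prodVal D
  rcases hCd with h0 | ⟨hCp, hCt⟩
  · refine ⟨0, ?_⟩
    have heq : ∀ x, prodImp (prodVal A9 R9 C x) (prodVal A9 R9 D x) = 1 := fun x => by
      rw [h0 x]; exact prodImp_zero_left (hDb x).1
    unfold prodSub
    simp only [heq, ciInf_const]
  · rcases hDd with g0 | ⟨hDp, hDt⟩
    · refine ⟨0, ?_⟩
      have heq : ∀ x, prodImp (prodVal A9 R9 C x) (prodVal A9 R9 D x) = 0 := fun x => by
        rw [g0 x]; exact prodImp_pos_zero (hCp x)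
      unfold prodSub
      simp only [heq, ciInf_const]
    · have hle : ∀ x, prodImp (prodVal A9 R9 C x) (prodVal A9 R9 D x) ≤ 1 :=
        fun x => prodImp_le_one (hDb x).1
      have hge : ∀ x, 0 ≤ prodImp (prodVal A9 R9 C x) (prodVal A9 R9 D x) :=
        fun x => prodImp_nonneg (hCb x).1 (hDb x).1
      have htend : Tendsto (fun x => prodImp (prodVal A9 R9 C x) (prodVal A9 R9 D x))
          atTop (𝓝 1) := by
        have hmin : Tendsto (fun x => min 1 (prodVal A9 R9 D x / prodVal A9 R9 C x))
            atTop (𝓝 (min 1 (1 / 1))) :=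
          tendsto_const_nhds.min (hDt.div hCt one_ne_zero)
        norm_num at hmin
        exact hmin.congr fun x => (prodImp_eq_min (hCp x)).symm
      exact ciInf_attained _ hge hle htend

lemma prodVal_all_atom (x : ℕ) : prodVal A9 R9 (ALCConcept.all ALCConcept.atom) x = A9 (x + 1) := by
  simp only [prodVal]
  exact allEq A9 (fun y => ⟨(A9_pos y).le, A9_le_one y⟩) x

lemma prodVal_ex_atom (x : ℕ) : prodVal A9 R9 (ALCConcept.ex ALCConcept.atom) x = A9 (x + 1) := by
  simp only [prodVal]
  exact exEq A9 (fun y => ⟨(A9_pos y).le, A9_le_one y⟩) x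

lemma prodSub_eq_one {C D : ALCConcept} (h : ∀ x, prodVal A9 R9 C x = prodVal A9 R9 D x) :
    prodSub A9 R9 C D = 1 := by
  unfold prodSub
  have heq : ∀ x, prodImp (prodVal A9 R9 C x) (prodVal A9 R9 D x) = 1 := fun x => by
    rw [h x]; exact prodImp_self _
  simp only [heq, ciInf_const]

theorem stmt9 :
    IsInterp A9 R9 ∧ Witnessed A9 R9 ∧ ModelK2 A9 R9 0 := by
  have hAb : ∀ x, A9 x ∈ Set.Icc (0:ℝ) 1 := fun x => ⟨(A9_pos x).le, A9_le_one x⟩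
  have hextop : ∀ x, prodVal A9 R9 (ALCConcept.ex ALCConcept.top) x = 1 := fun x => by
    have h0 : prodVal A9 R9 (ALCConcept.ex ALCConcept.top) x
        = ⨆ y, prodT (R9 x y) (prodVal A9 R9 ALCConcept.top y) := rfl
    rw [h0, exEq _ (nice_prodVal ALCConcept.top).1 x]
    rfl
  have hconj : ∀ x, prodVal A9 R9
      (ALCConcept.conj (ALCConcept.all ALCConcept.atom) (ALCConcept.all ALCConcept.atom)) x
      = prodVal A9 R9 ALCConcept.atom x := fun x => by
    have h1 : prodVal A9 R9
        (ALCConcept.conj (ALCConcept.all ALCConcept.atom) (ALCConcept.all ALCConcept.atom)) x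
        = prodT (prodVal A9 R9 (ALCConcept.all ALCConcept.atom) x)
            (prodVal A9 R9 (ALCConcept.all ALCConcept.atom) x) := rfl
    rw [h1, prodVal_all_atom, prodT]
    exact A9_sq x
  refine ⟨⟨⟨0⟩, hAb, fun x y => ?_⟩, fun C D x => ⟨⟨x + 1, ?_⟩, ⟨x + 1, ?_⟩, sub_witness C D⟩,
    ?_, ?_, ⟨?_, ?_⟩, ?_, ?_⟩
  · unfold R9; split <;> norm_num
  · simp only [prodVal]
    rw [exEq _ (nice_prodVal C).1 x]
    simp [prodT, R9]
  · simp only [prodVal]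
    rw [allEq _ (nice_prodVal C).1 x]
    simp only [R9, if_pos rfl]
    exact (prodImp_one_left_s9 ((nice_prodVal C).1 (x + 1)).2).symm
  · show A9 0 = 1 / 2
    simp [A9]
  · exact prodSub_eq_one fun x => by rw [hextop x]; rfl
  · exact prodSub_eq_one fun x => by rw [prodVal_all_atom, prodVal_ex_atom]
  · exact prodSub_eq_one fun x => by rw [prodVal_all_atom, prodVal_ex_atom]
  · exact prodSub_eq_one fun x => (hconj x).symm
  · exact prodSub_eq_one hconj
end

section
/- Consider, under Product semantics, the interpretation I defined by: Δ^I = {1, 2, 3, …}; R^I(i, i+1) = 1 for every i and R^I(u, v) = 0 for all other pairs; A^I(i) = (1/2)^(1/2^(i−1)) for every i. Then for every concept C, exactly one of the following holds: either C^I(i) = 0 for every i ∈ ℕ, or 0 < C^I(1) ≤ C^I(2) ≤ C^I(3) ≤ … and sup{C^I(i) : i ∈ ℕ} = 1. -/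
open Filter Topology

private lemma prodImp_mem {x y : ℝ} (hx : 0 ≤ x) (hy : 0 ≤ y) :
    prodImp x y ∈ Set.Icc (0:ℝ) 1 := by
  unfold prodImp
  split
  · exact ⟨zero_le_one, le_refl 1⟩
  · rename_i h
    push_neg at h
    have hx' : 0 < x := lt_of_le_of_lt hy h
    exact ⟨div_nonneg hy hx, (div_le_one hx').mpr h.le⟩

private lemma prodImp_zero {y : ℝ} (hy : 0 ≤ y) : prodImp 0 y = 1 := by
  unfold prodImp; simp [hy]

private lemma prodImp_one {y : ℝ} (hy : y ≤ 1) : prodImp 1 y = y := by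
  unfold prodImp
  split
  · rename_i h; linarith
  · simp

private lemma R9_mem (i j : ℕ) : R9 i j ∈ Set.Icc (0:ℝ) 1 := by
  unfold R9; split <;> norm_num

private lemma prodVal_mem (C : ALCConcept) (i : ℕ) :
    prodVal A9 R9 C i ∈ Set.Icc (0:ℝ) 1 := by
  induction C generalizing i with
  | atom =>
    refine ⟨Real.rpow_nonneg (by norm_num) _, Real.rpow_le_one (by norm_num) (by norm_num) ?_⟩
    positivity
  | top => simp [prodVal]
  | bot => simp [prodVal]
  | conj D E hD hE =>
    obtain ⟨h1, h2⟩ := hD i; obtain ⟨h3, h4⟩ := hE i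
    exact ⟨mul_nonneg h1 h3, mul_le_one₀ h2 h3 h4⟩
  | disj D E hD hE =>
    obtain ⟨h1, h2⟩ := hD i; obtain ⟨h3, h4⟩ := hE i
    constructor
    · show (0:ℝ) ≤ _ + _ - _ * _; nlinarith
    · show _ + _ - _ * _ ≤ (1:ℝ); nlinarith
  | neg D hD =>
    show prodNeg _ ∈ _
    unfold prodNeg; split <;> norm_num
  | all D hD =>
    have hmem : ∀ y : ℕ, prodImp (R9 i y) (prodVal A9 R9 D y) ∈ Set.Icc (0:ℝ) 1 :=
      fun y => prodImp_mem (R9_mem i y).1 (hD y).1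
    have hbdd : BddBelow (Set.range fun y => prodImp (R9 i y) (prodVal A9 R9 D y)) :=
      ⟨0, by rintro z ⟨y, rfl⟩; exact (hmem y).1⟩
    constructor
    · exact le_ciInf fun y => (hmem y).1
    · exact le_trans (ciInf_le hbdd 0) (hmem 0).2
  | ex D hD =>
    have hmem : ∀ y : ℕ, prodT (R9 i y) (prodVal A9 R9 D y) ∈ Set.Icc (0:ℝ) 1 := by
      intro y
      obtain ⟨h1, h2⟩ := R9_mem i y; obtain ⟨h3, h4⟩ := hD y
      exact ⟨mul_nonneg h1 h3, mul_le_one₀ h2 h3 h4⟩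
    have hbdd : BddAbove (Set.range fun y => prodT (R9 i y) (prodVal A9 R9 D y)) :=
      ⟨1, by rintro z ⟨y, rfl⟩; exact (hmem y).2⟩
    constructor
    · exact le_trans (hmem 0).1 (le_ciSup hbdd 0)
    · exact ciSup_le fun y => (hmem y).2

private lemma val_all (C : ALCConcept) (i : ℕ) :
    prodVal A9 R9 (ALCConcept.all C) i = prodVal A9 R9 C (i + 1) := by
  show (⨅ y, prodImp (R9 i y) (prodVal A9 R9 C y)) = _
  have hval : ∀ y : ℕ, prodImp (R9 i y) (prodVal A9 R9 C y)
      = if y = i + 1 then prodVal A9 R9 C (i+1) else 1 := by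
    intro y
    by_cases h : y = i + 1
    · subst h
      have hr : R9 i (i+1) = 1 := by unfold R9; simp
      simp [hr, prodImp_one (prodVal_mem C (i+1)).2]
    · simp only [if_neg h]
      have : R9 i y = 0 := by unfold R9; simp [h]
      rw [this, prodImp_zero (prodVal_mem C y).1]
  have hbdd : BddBelow (Set.range fun y => prodImp (R9 i y) (prodVal A9 R9 C y)) := by
    refine ⟨0, ?_⟩
    rintro z ⟨y, rfl⟩
    exact (prodImp_mem (R9_mem i y).1 (prodVal_mem C y).1).1
  apply le_antisymm
  · have := ciInf_le hbdd (i+1)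
    rwa [hval (i+1), if_pos rfl] at this
  · apply le_ciInf
    intro y
    rw [hval y]
    split
    · exact le_refl _
    · exact (prodVal_mem C (i+1)).2

private lemma val_ex (C : ALCConcept) (i : ℕ) :
    prodVal A9 R9 (ALCConcept.ex C) i = prodVal A9 R9 C (i + 1) := by
  show (⨆ y, prodT (R9 i y) (prodVal A9 R9 C y)) = _
  have hval : ∀ y : ℕ, prodT (R9 i y) (prodVal A9 R9 C y)
      = if y = i + 1 then prodVal A9 R9 C (i+1) else 0 := by
    intro y
    by_cases h : y = i + 1
    · subst h
      have : R9 i (i+1) = 1 := by unfold R9; simp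
      simp [prodT, this]
    · have : R9 i y = 0 := by unfold R9; simp [h]
      simp [prodT, this, h]
  have hbdd : BddAbove (Set.range fun y => prodT (R9 i y) (prodVal A9 R9 C y)) := by
    refine ⟨prodVal A9 R9 C (i+1), ?_⟩
    rintro z ⟨y, rfl⟩
    simp only [hval y]
    split
    · exact le_refl _
    · exact (prodVal_mem C (i+1)).1
  apply le_antisymm
  · apply ciSup_le
    intro y
    simp only [hval y]
    split
    · exact le_refl _
    · exact (prodVal_mem C (i+1)).1
  · have := le_ciSup hbdd (i+1)
    rwa [hval (i+1), if_pos rfl] at this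

/-- Good behaviour: positive at 0, monotone, tends to 1. -/
private def Good9 (f : ℕ → ℝ) : Prop :=
  0 < f 0 ∧ Monotone f ∧ Tendsto f atTop (𝓝 1)

private lemma good_shift {f : ℕ → ℝ} (h : Good9 f) : Good9 (fun i => f (i + 1)) := by
  obtain ⟨h0, hm, ht⟩ := h
  refine ⟨lt_of_lt_of_le h0 (hm (Nat.zero_le 1)), ?_, ?_⟩
  · exact fun i j hij => hm (by omega)
  · exact ht.comp (tendsto_add_atTop_nat 1)

private lemma main9 (C : ALCConcept) :
    (∀ i : ℕ, prodVal A9 R9 C i = 0) ∨ Good9 (fun i => prodVal A9 R9 C i) := by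
  induction C with
  | atom =>
    right
    refine ⟨?_, ?_, ?_⟩
    · show (0:ℝ) < A9 0
      unfold A9
      positivity
    · show Monotone A9
      intro i j hij
      unfold A9
      exact Real.rpow_le_rpow_of_exponent_ge (by norm_num) (by norm_num)
        (pow_le_pow_of_le_one (by norm_num) (by norm_num) hij)
    · show Tendsto A9 atTop (𝓝 1)
      have h1 : Tendsto (fun i : ℕ => ((1:ℝ)/2) ^ i) atTop (𝓝 0) :=
        tendsto_pow_atTop_nhds_zero_of_lt_one (by norm_num) (by norm_num)
      have h2 : ContinuousAt (fun x : ℝ => ((1:ℝ)/2) ^ x) 0 :=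
        Real.continuousAt_const_rpow (by norm_num)
      have h3 := (h2.tendsto).comp h1
      simp only [Real.rpow_zero] at h3
      have heq : A9 = (fun x : ℝ => ((1:ℝ)/2) ^ x) ∘ (fun i : ℕ => ((1:ℝ)/2) ^ i) := by
        funext i; simp [A9, Function.comp]
      rw [heq]
      exact h3
  | top =>
    right
    exact ⟨one_pos, monotone_const, tendsto_const_nhds⟩
  | bot => left; intro i; rfl
  | conj D E hD hE =>
    rcases hD with hD | hD
    · left; intro i; show prodT _ _ = 0; rw [hD i]; simp [prodT]
    rcases hE with hE | hE
    · left; intro i; show prodT _ _ = 0; rw [hE i]; simp [prodT]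
    right
    obtain ⟨hD0, hDm, hDt⟩ := hD; obtain ⟨hE0, hEm, hEt⟩ := hE
    refine ⟨mul_pos hD0 hE0, ?_, ?_⟩
    · intro i j hij
      show prodVal A9 R9 D i * prodVal A9 R9 E i ≤ prodVal A9 R9 D j * prodVal A9 R9 E j
      exact mul_le_mul (hDm hij) (hEm hij) (prodVal_mem E i).1 (prodVal_mem D j).1
    · show Tendsto (fun i => prodVal A9 R9 D i * prodVal A9 R9 E i) atTop (𝓝 1)
      simpa using hDt.mul hEt
  | disj D E hD hE =>
    have key : ∀ i, prodVal A9 R9 (ALCConcept.disj D E) i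
        = prodVal A9 R9 D i + prodVal A9 R9 E i - prodVal A9 R9 D i * prodVal A9 R9 E i :=
      fun i => rfl
    rcases hD with hD | hD
    · rcases hE with hE | hE
      · left; intro i; rw [key i, hD i, hE i]; ring
      · right
        obtain ⟨hE0, hEm, hEt⟩ := hE
        have heq : ∀ i, prodVal A9 R9 (ALCConcept.disj D E) i = prodVal A9 R9 E i := by
          intro i; rw [key i, hD i]; ring
        refine ⟨by simp only [heq]; exact hE0, ?_, ?_⟩
        · intro i j hij; simp only [heq]; exact hEm hij
        · simp only [heq]; exact hEt
    rcases hE with hE | hE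
    · right
      obtain ⟨hD0, hDm, hDt⟩ := hD
      have heq : ∀ i, prodVal A9 R9 (ALCConcept.disj D E) i = prodVal A9 R9 D i := by
        intro i; rw [key i, hE i]; ring
      refine ⟨by simp only [heq]; exact hD0, ?_, ?_⟩
      · intro i j hij; simp only [heq]; exact hDm hij
      · simp only [heq]; exact hDt
    right
    obtain ⟨hD0, hDm, hDt⟩ := hD; obtain ⟨hE0, hEm, hEt⟩ := hE
    refine ⟨?_, ?_, ?_⟩
    · simp only [key]
      have hE0' : (0:ℝ) < prodVal A9 R9 E 0 := hE0
      have hD0' : (0:ℝ) < prodVal A9 R9 D 0 := hD0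
      have h1 := (prodVal_mem D 0)
      have h2 := (prodVal_mem E 0)
      obtain ⟨h1a, h1b⟩ := h1; obtain ⟨h2a, h2b⟩ := h2
      nlinarith
    · intro i j hij
      simp only [key]
      have h1 := prodVal_mem D i; have h2 := prodVal_mem E i
      have h3 := prodVal_mem D j; have h4 := prodVal_mem E j
      have h5 : prodVal A9 R9 D i ≤ prodVal A9 R9 D j := hDm hij
      have h6 : prodVal A9 R9 E i ≤ prodVal A9 R9 E j := hEm hij
      obtain ⟨h1a, h1b⟩ := h1; obtain ⟨h2a, h2b⟩ := h2
      obtain ⟨h3a, h3b⟩ := h3; obtain ⟨h4a, h4b⟩ := h4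
      nlinarith
    · simp only [key]
      have := (hDt.add hEt).sub (hDt.mul hEt)
      simpa using this
  | neg D hD =>
    rcases hD with hD | hD
    · right
      have heq : ∀ i, prodVal A9 R9 (ALCConcept.neg D) i = 1 := by
        intro i; show prodNeg _ = 1; rw [hD i]; simp [prodNeg]
      refine ⟨by simp only [heq]; exact one_pos, ?_, ?_⟩
      · intro i j hij; simp only [heq]; exact le_refl _
      · simp only [heq]; exact tendsto_const_nhds
    · left
      obtain ⟨hD0, hDm, _⟩ := hD
      intro i
      show prodNeg _ = 0
      have : prodVal A9 R9 D i ≠ 0 := by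
        have : (0:ℝ) < prodVal A9 R9 D i := lt_of_lt_of_le hD0 (hDm (Nat.zero_le i))
        exact ne_of_gt this
      simp [prodNeg, this]
  | all D hD =>
    rcases hD with hD | hD
    · left; intro i; rw [val_all]; exact hD (i+1)
    · right
      have heq : (fun i => prodVal A9 R9 (ALCConcept.all D) i)
          = fun i => prodVal A9 R9 D (i+1) := funext fun i => val_all D i
      rw [heq]
      exact good_shift hD
  | ex D hD =>
    rcases hD with hD | hD
    · left; intro i; rw [val_ex]; exact hD (i+1)
    · right
      have heq : (fun i => prodVal A9 R9 (ALCConcept.ex D) i)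
          = fun i => prodVal A9 R9 D (i+1) := funext fun i => val_ex D i
      rw [heq]
      exact good_shift hD

theorem stmt10 (C : ALCConcept) :
    Xor'
      (∀ i : ℕ, prodVal A9 R9 C i = 0)
      (0 < prodVal A9 R9 C 0 ∧ Monotone (fun i : ℕ => prodVal A9 R9 C i) ∧
        (⨆ i : ℕ, prodVal A9 R9 C i) = 1) := by

  rcases main9 C with h | h
  · left
    refine ⟨h, ?_⟩
    rintro ⟨hpos, -, -⟩
    rw [h 0] at hpos
    exact lt_irrefl 0 hpos
  · right
    obtain ⟨h0, hm, ht⟩ := h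
    have hbdd : BddAbove (Set.range fun i : ℕ => prodVal A9 R9 C i) :=
      ⟨1, by rintro z ⟨i, rfl⟩; exact (prodVal_mem C i).2⟩
    have hsup : (⨆ i : ℕ, prodVal A9 R9 C i) = 1 :=
      tendsto_nhds_unique (tendsto_atTop_ciSup hm hbdd) ht
    refine ⟨⟨h0, hm, hsup⟩, ?_⟩
    intro hz
    have h0' : (0:ℝ) < prodVal A9 R9 C 0 := h0
    rw [hz 0] at h0'
    exact lt_irrefl 0 h0'
end
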